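/- arXiv:math/0006191 — 5 statements merged into one kernel-verified Lean document; each statement's English description precedes it below -/
import Mathlib

section
/- Let n ≥ 0 and k ≥ 1 be integers, let B be the symmetric bilinear form on ℤ^{1+n} given by B(x,y) = k·x₀·y₀ − Σ_{i=1}^n xᵢ·yᵢ, and let L ≤ ℤ^{1+n} be a subgroup with B(u,v) = 0 for all u,v ∈ L. Let S be the set of vectors in ℤ^{1+n} all of whose coordinates lie in {1, −1}. Then any coset of L in ℤ^{1+n} contains at most two elements of S, and if c, c' ∈ S are distinct with c − c' ∈ L, then their 0-th coordinates are opposite: c₀ = −c'₀. -/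
/-- The symmetric bilinear form `B(x,y) = k·x₀·y₀ − ∑_{i=1}^n xᵢ·yᵢ` on `ℤ^{1+n}`. -/
def Bform (n : ℕ) (k : ℤ) (x y : Fin (n + 1) → ℤ) : ℤ :=
  k * x 0 * y 0 - ∑ i : Fin n, x i.succ * y i.succ

theorem stmt2 (n : ℕ) (k : ℤ) (hk : 1 ≤ k)
    (L : AddSubgroup (Fin (n + 1) → ℤ))
    (hL : ∀ u ∈ L, ∀ v ∈ L, Bform n k u v = 0) :
    (∀ x : Fin (n + 1) → ℤ,
      Set.ncard {c : Fin (n + 1) → ℤ |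
        (∀ i, c i = 1 ∨ c i = -1) ∧ c - x ∈ L} ≤ 2) ∧
    (∀ c c' : Fin (n + 1) → ℤ,
      (∀ i, c i = 1 ∨ c i = -1) → (∀ i, c' i = 1 ∨ c' i = -1) →
      c ≠ c' → c - c' ∈ L → c 0 = -c' 0) := by
  have key : ∀ c c' : Fin (n + 1) → ℤ,
      c - c' ∈ L → c 0 = c' 0 → c = c' := by
    intro c c' hmem h0
    have hb := hL _ hmem _ hmem
    unfold Bform at hb
    have hu0 : (c - c') 0 = 0 := by simp [h0]
    rw [hu0] at hb
    simp only [mul_zero, zero_mul, zero_sub, neg_eq_zero] at hb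
    have hz : ∀ i : Fin n, (c - c') i.succ = 0 := by
      intro i
      have h := (Finset.sum_eq_zero_iff_of_nonneg
        (fun j _ => mul_self_nonneg ((c - c') j.succ))).mp hb i (Finset.mem_univ i)
      exact mul_self_eq_zero.mp h
    funext j
    have hj : (c - c') j = 0 := by
      induction j using Fin.cases with
      | zero => exact hu0
      | succ i => exact hz i
    have := hj
    simp only [Pi.sub_apply] at this
    linarith
  constructor
  · intro x
    set T : Set (Fin (n + 1) → ℤ) :=
      {c | (∀ i, c i = 1 ∨ c i = -1) ∧ c - x ∈ L} with hT
    rcases Set.eq_empty_or_nonempty T with h | ⟨a, ha⟩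
    · simp [h]
    · have hsub : ∀ c ∈ T, c - a ∈ L := by
        intro c hc
        have : c - a = (c - x) - (a - x) := by abel
        rw [this]
        exact L.sub_mem hc.2 ha.2
      by_cases hb : ∃ b ∈ T, b 0 ≠ a 0
      · obtain ⟨b, hbT, hb0⟩ := hb
        have hTsub : T ⊆ {a, b} := by
          intro c hc
          by_cases hc0 : c 0 = a 0
          · left; exact key c a (hsub c hc) hc0
          · right
            refine key c b (by
              have : c - b = (c - a) - (b - a) := by abel
              rw [this]; exact L.sub_mem (hsub c hc) (hsub b hbT)) ?_
            rcases hc.1 0 with h1 | h1 <;> rcases hbT.1 0 with h2 | h2 <;>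
              rcases ha.1 0 with h3 | h3 <;> omega
        calc Set.ncard T ≤ Set.ncard {a, b} :=
              Set.ncard_le_ncard hTsub ((Set.finite_singleton b).insert a)
          _ ≤ 2 := by
              have := Set.ncard_insert_le a {b}
              simpa using this
      · push_neg at hb
        have hTsub : T ⊆ {a} := by
          intro c hc
          exact key c a (hsub c hc) (hb c hc)
        calc Set.ncard T ≤ Set.ncard {a} :=
              Set.ncard_le_ncard hTsub (Set.finite_singleton a)
          _ ≤ 2 := by simp
  · intro c c' hc hc' hne hmem
    rcases hc 0 with h1 | h1 <;> rcases hc' 0 with h2 | h2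
    · exact absurd (key c c' hmem (by omega)) hne
    · omega
    · omega
    · exact absurd (key c c' hmem (by omega)) hne
end

section
/- Let n ≥ 0 and k ≥ 1 be integers, let B be the symmetric bilinear form on ℤ^{1+n} given by B(x,y) = k·x₀·y₀ − Σ_{i=1}^n xᵢ·yᵢ, and let L ≤ ℤ^{1+n} be a subgroup with B(u,v) = 0 for all u,v ∈ L. Let v = (1, −1, −1, …, −1) and suppose v' ∈ ℤ^{1+n} has all coordinates in {1, −1}, v' ≠ v, and v − v' ∈ L. Then v'₀ = −1 and the number of indices i ∈ {1, …, n} with v'ᵢ = 1 equals k; in particular 1 ≤ k ≤ n. -/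
theorem stmt3 (n : ℕ) (k : ℤ) (hk : 1 ≤ k)
    (L : AddSubgroup (Fin (n + 1) → ℤ))
    (hL : ∀ u ∈ L, ∀ v ∈ L, Bform n k u v = 0)
    (v : Fin (n + 1) → ℤ) (hv : v = fun i => if i = 0 then 1 else -1)
    (v' : Fin (n + 1) → ℤ) (hv' : ∀ i, v' i = 1 ∨ v' i = -1)
    (hne : v' ≠ v) (hdiff : v - v' ∈ L) :
    v' 0 = -1 ∧
    ((Finset.univ.filter fun i : Fin n => v' i.succ = 1).card : ℤ) = k ∧
    1 ≤ k ∧ k ≤ (n : ℤ) := by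
  have hB := hL _ hdiff _ hdiff
  unfold Bform at hB
  set c := (Finset.univ.filter fun i : Fin n => v' i.succ = 1).card with hc
  have hterm : ∀ i : Fin n,
      ((v - v') i.succ) * ((v - v') i.succ) = if v' i.succ = 1 then 4 else 0 := by
    intro i
    have hvs : v i.succ = -1 := by simp [hv, Fin.succ_ne_zero]
    rcases hv' i.succ with h | h <;> simp [Pi.sub_apply, hvs, h]
  have hsum : ∑ i : Fin n, ((v - v') i.succ) * ((v - v') i.succ) = 4 * c := by
    rw [Finset.sum_congr rfl fun i _ => hterm i, Finset.sum_ite, Finset.sum_const,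
      Finset.sum_const]
    simp [mul_comm]
    convert hc.symm
  have hv0 : v 0 = 1 := by simp [hv]
  have hcn : (c : ℤ) ≤ n := by
    have := Finset.card_filter_le Finset.univ (fun i : Fin n => v' i.succ = 1)
    simpa using Int.ofNat_le.mpr this
  rcases hv' 0 with h0 | h0
  · -- v' 0 = 1 leads to contradiction
    exfalso
    have hd0 : (v - v') 0 = 0 := by simp [Pi.sub_apply, hv0, h0]
    rw [hd0, hsum] at hB
    have hc0 : c = 0 := by omega
    apply hne
    funext i
    refine Fin.cases ?_ ?_ i
    · rw [h0, hv0]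
    · intro j
      have : v' j.succ ≠ 1 := by
        intro hj
        have : j ∈ Finset.univ.filter fun i : Fin n => v' i.succ = 1 := by
          simp [hj]
        rw [Finset.card_eq_zero] at hc0
        simp [hc0] at this
      have hvs : v j.succ = -1 := by simp [hv, Fin.succ_ne_zero]
      rcases hv' j.succ with h | h
      · exact absurd h this
      · rw [h, hvs]
  · have hd0 : (v - v') 0 = 2 := by simp [Pi.sub_apply, hv0, h0]
    rw [hd0, hsum] at hB
    have hck : (c : ℤ) = k := by linarith
    exact ⟨h0, hck, hk, by omega⟩
end

section
/- Let n ≥ 0 and k ≥ 1 be integers, let B be the symmetric bilinear form on ℤ^{1+n} given by B(x,y) = k·x₀·y₀ − Σ_{i=1}^n xᵢ·yᵢ, and let L ≤ ℤ^{1+n} be a subgroup with B(u,v) = 0 for all u,v ∈ L. Let w = (1, 1, 1, …, 1) and suppose w' ∈ ℤ^{1+n} has all coordinates in {1, −1}, w' ≠ w, and w − w' ∈ L. Then w'₀ = −1 and the number of indices i ∈ {1, …, n} with w'ᵢ = −1 equals k; in particular 1 ≤ k ≤ n. -/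
theorem stmt4 (n : ℕ) (k : ℤ) (hk : 1 ≤ k)
    (L : AddSubgroup (Fin (n + 1) → ℤ))
    (hL : ∀ u ∈ L, ∀ v ∈ L, Bform n k u v = 0)
    (w : Fin (n + 1) → ℤ) (hw : w = fun _ => 1)
    (w' : Fin (n + 1) → ℤ) (hw' : ∀ i, w' i = 1 ∨ w' i = -1)
    (hne : w' ≠ w) (hdiff : w - w' ∈ L) :
    w' 0 = -1 ∧
    ((Finset.univ.filter fun i : Fin n => w' i.succ = -1).card : ℤ) = k ∧
    1 ≤ k ∧ k ≤ (n : ℤ) := by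
  have hB := hL _ hdiff _ hdiff
  have hd : ∀ i, (w - w') i = if w' i = -1 then 2 else 0 := by
    intro i
    rcases hw' i with h | h <;> simp [hw, h]
  rw [Bform, sub_eq_zero] at hB
  have hsum : (∑ i : Fin n, (w - w') i.succ * (w - w') i.succ)
      = 4 * ((Finset.univ.filter fun i : Fin n => w' i.succ = -1).card : ℤ) := by
    calc (∑ i : Fin n, (w - w') i.succ * (w - w') i.succ)
        = ∑ i : Fin n, (if w' i.succ = -1 then (4:ℤ) else 0) :=
          Finset.sum_congr rfl (fun i _ => by rw [hd]; split <;> ring)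
      _ = 4 * ((Finset.univ.filter fun i : Fin n => w' i.succ = -1).card : ℤ) := by
          rw [Finset.sum_ite, Finset.sum_const, Finset.sum_const]
          simp [mul_comm]
  rw [hsum] at hB
  have hcard_le : (Finset.univ.filter fun i : Fin n => w' i.succ = -1).card ≤ n := by
    simpa using Finset.card_filter_le Finset.univ (fun i : Fin n => w' i.succ = -1)
  rcases hw' 0 with h0 | h0
  · exfalso
    have hz : (w - w') 0 = 0 := by rw [hd]; simp [h0]
    rw [hz] at hB
    have hcard0 : (Finset.univ.filter fun i : Fin n => w' i.succ = -1).card = 0 := by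
      omega
    rw [Finset.card_eq_zero, Finset.filter_eq_empty_iff] at hcard0
    apply hne
    funext i
    rcases Fin.eq_zero_or_eq_succ i with rfl | ⟨j, rfl⟩
    · simp [hw, h0]
    · have := hcard0 (Finset.mem_univ j)
      rcases hw' j.succ with h | h
      · simp [hw, h]
      · exact absurd h this
  · have h2 : (w - w') 0 = 2 := by rw [hd]; simp [h0]
    rw [h2] at hB
    refine ⟨h0, by omega, hk, ?_⟩
    omega
end

section
/- Let n ≥ 0 and k ≥ 1 be integers, let B be the symmetric bilinear form on ℤ^{1+n} given by B(x,y) = k·x₀·y₀ − Σ_{i=1}^n xᵢ·yᵢ, and let L ≤ ℤ^{1+n} be a subgroup with B(u,v) = 0 for all u,v ∈ L. Let S be the set of vectors in ℤ^{1+n} all of whose coordinates lie in {1, −1}. Then at least one of the two vectors v = (1, −1, −1, …, −1) and w = (1, 1, 1, …, 1) is alone in its L-coset within S; that is, either every v' ∈ S with v − v' ∈ L equals v, or every w' ∈ S with w − w' ∈ L equals w. -/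
theorem stmt5 (n : ℕ) (k : ℤ) (hk : 1 ≤ k)
    (L : AddSubgroup (Fin (n + 1) → ℤ))
    (hL : ∀ u ∈ L, ∀ v ∈ L, Bform n k u v = 0)
    (v w : Fin (n + 1) → ℤ)
    (hv : v = fun i => if i = 0 then 1 else -1)
    (hw : w = fun _ => 1) :
    (∀ v' : Fin (n + 1) → ℤ,
        (∀ i, v' i = 1 ∨ v' i = -1) → v - v' ∈ L → v' = v) ∨
    (∀ w' : Fin (n + 1) → ℤ,
        (∀ i, w' i = 1 ∨ w' i = -1) → w - w' ∈ L → w' = w) := by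
  by_contra h
  push_neg at h
  obtain ⟨⟨v', hv'S, hv'L, hv'ne⟩, ⟨w', hw'S, hw'L, hw'ne⟩⟩ := h
  have hv0 : v 0 = 1 := by simp [hv]
  have hvs : ∀ i : Fin n, v i.succ = -1 := by
    intro i; simp [hv, Fin.succ_ne_zero]
  have hws : ∀ i : Fin (n+1), w i = 1 := by intro i; simp [hw]
  -- D = v - v', E = w - w'
  have hDD := hL _ hv'L _ hv'L
  have hEE := hL _ hw'L _ hw'L
  have hDE := hL _ hv'L _ hw'L
  unfold Bform at hDD hEE hDE
  simp only [Pi.sub_apply] at hDD hEE hDE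
  -- D 0 = 2
  have hD0 : v 0 - v' 0 = 2 := by
    rcases hv'S 0 with h0 | h0
    · exfalso
      have hz : v 0 - v' 0 = 0 := by rw [hv0, h0]; ring
      rw [hz] at hDD
      have hsum : ∑ i : Fin n,
          (v i.succ - v' i.succ) * (v i.succ - v' i.succ) = 0 := by linarith
      have hzero : ∀ i ∈ (Finset.univ : Finset (Fin n)), (v i.succ - v' i.succ) *
          (v i.succ - v' i.succ) = 0 :=
        (Finset.sum_eq_zero_iff_of_nonneg (fun i _ => mul_self_nonneg _)).mp hsum
      apply hv'ne
      funext i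
      refine Fin.cases ?_ ?_ i
      · rw [hv0, h0]
      · intro j
        have := hzero j (Finset.mem_univ j)
        have h2 : v j.succ - v' j.succ = 0 := by
          rcases mul_self_eq_zero.mp this with h; exact h
        linarith [hvs j]
    · rw [hv0, h0]; ring
  -- E 0 = 2
  have hE0 : w 0 - w' 0 = 2 := by
    rcases hw'S 0 with h0 | h0
    · exfalso
      have hz : w 0 - w' 0 = 0 := by rw [hws 0, h0]; ring
      rw [hz] at hEE
      have hsum : ∑ i : Fin n,
          (w i.succ - w' i.succ) * (w i.succ - w' i.succ) = 0 := by linarith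
      have hzero : ∀ i ∈ (Finset.univ : Finset (Fin n)), (w i.succ - w' i.succ) *
          (w i.succ - w' i.succ) = 0 :=
        (Finset.sum_eq_zero_iff_of_nonneg (fun i _ => mul_self_nonneg _)).mp hsum
      apply hw'ne
      funext i
      refine Fin.cases ?_ ?_ i
      · rw [hws 0, h0]
      · intro j
        have := hzero j (Finset.mem_univ j)
        have h2 : w j.succ - w' j.succ = 0 := mul_self_eq_zero.mp this
        linarith [hws j.succ]
    · rw [hws 0, h0]; ring
  -- each cross term is ≤ 0
  have hterm : ∀ i : Fin n, (v i.succ - v' i.succ) * (w i.succ - w' i.succ) ≤ 0 := by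
    intro i
    rcases hv'S i.succ with h1 | h1 <;> rcases hw'S i.succ with h2 | h2 <;>
      rw [hvs i, hws i.succ, h1, h2] <;> norm_num
  have hsumle : ∑ i : Fin n, (v i.succ - v' i.succ) * (w i.succ - w' i.succ) ≤ 0 :=
    Finset.sum_nonpos fun i _ => hterm i
  rw [hD0, hE0] at hDE
  nlinarith
end

section
/- Let n ≥ 0 and k ≥ 1 be integers, let B be the symmetric bilinear form on ℤ^{1+n} given by B(x,y) = k·x₀·y₀ − Σ_{i=1}^n xᵢ·yᵢ, and let L ≤ ℤ^{1+n} be a subgroup with B(u,v) = 0 for all u,v ∈ L. Let S be the set of vectors in ℤ^{1+n} all of whose coordinates lie in {1, −1}. Then there exists c ∈ S such that for every c' ∈ S with c − c' ∈ L one has c' = c; that is, S cannot be covered by L-cosets each containing at least two elements of S. -/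
private lemma zero_of_sq_sum {n : ℕ} {u : Fin (n + 1) → ℤ}
    (h : ∑ i : Fin n, u i.succ * u i.succ = 0) (u0 : u 0 = 0) : u = 0 := by
  have h' : ∀ i : Fin n, u i.succ * u i.succ = 0 := fun i =>
    (Finset.sum_eq_zero_iff_of_nonneg (fun i _ => mul_self_nonneg (u i.succ))).mp h i
      (Finset.mem_univ i)
  funext j
  refine Fin.cases ?_ ?_ j
  · exact u0
  · intro i; exact mul_self_eq_zero.mp (h' i)

private lemma head_two {n : ℕ} {k : ℤ} (_hk : 1 ≤ k) {a u : Fin (n + 1) → ℤ}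
    (ha0 : a 0 = 1) (hc' : ∀ i, (a - u) i = 1 ∨ (a - u) i = -1)
    (hq : Bform n k u u = 0) (hne : a - u ≠ a) : u 0 = 2 := by
  rcases hc' 0 with h | h
  · exfalso
    have hu0 : u 0 = 0 := by
      have := h; simp only [Pi.sub_apply, ha0] at this; linarith
    have hz : ∑ i : Fin n, u i.succ * u i.succ = 0 := by
      unfold Bform at hq; rw [hu0] at hq; linarith
    have := zero_of_sq_sum hz hu0
    apply hne; rw [this]; simp
  · have := h; simp only [Pi.sub_apply, ha0] at this; linarith

theorem stmt6 (n : ℕ) (k : ℤ) (hk : 1 ≤ k)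
    (L : AddSubgroup (Fin (n + 1) → ℤ))
    (hL : ∀ u ∈ L, ∀ v ∈ L, Bform n k u v = 0) :
    ∃ c : Fin (n + 1) → ℤ, (∀ i, c i = 1 ∨ c i = -1) ∧
      ∀ c' : Fin (n + 1) → ℤ,
        (∀ i, c' i = 1 ∨ c' i = -1) → c - c' ∈ L → c' = c := by
  by_contra hcon
  push_neg at hcon
  -- hcon : for every ±1 vector c there is a ±1 vector c' with c - c' ∈ L and c' ≠ c
  set c : Fin (n + 1) → ℤ := fun _ => 1 with hcdef
  obtain ⟨c', hc', hmem, hne⟩ := hcon c (fun i => Or.inl rfl)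
  set u := c - c' with hudef
  have hcu : c - u = c' := by rw [hudef]; abel
  have hu0 : u 0 = 2 := by
    refine head_two hk (show c 0 = 1 by rw [hcdef]) ?_ (hL u hmem u hmem) ?_
    · rw [hcu]; exact hc'
    · rw [hcu]; exact hne
  -- second vector d : flip the 0th coordinate of c' back to 1
  set d : Fin (n + 1) → ℤ := Function.update c' 0 1 with hddef
  have hd : ∀ i, d i = 1 ∨ d i = -1 := by
    intro i
    by_cases h : i = 0
    · subst h; simp [hddef]
    · rw [hddef, Function.update_of_ne h]; exact hc' i
  obtain ⟨d', hd', hmem2, hne2⟩ := hcon d hd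
  set v := d - d' with hvdef
  have hdv : d - v = d' := by rw [hvdef]; abel
  have hd0 : d 0 = 1 := by simp [hddef]
  have hv0 : v 0 = 2 := by
    refine head_two hk hd0 ?_ (hL v hmem2 v hmem2) ?_
    · rw [hdv]; exact hd'
    · rw [hdv]; exact hne2
  -- B(u, v) = 0 gives the contradiction
  have hB : Bform n k u v = 0 := hL u hmem v hmem2
  unfold Bform at hB
  rw [hu0, hv0] at hB
  have hsum : ∑ i : Fin n, u i.succ * v i.succ = 4 * k := by linarith
  have hle : ∑ i : Fin n, u i.succ * v i.succ ≤ 0 := by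
    apply Finset.sum_nonpos
    intro i _
    have hus : u i.succ = 1 - c' i.succ := by simp [hudef, hcdef]
    have hvs : v i.succ = c' i.succ - d' i.succ := by
      rw [hvdef]
      simp [hddef, Function.update_of_ne (Fin.succ_ne_zero i)]
    rw [hus, hvs]
    rcases hc' i.succ with h1 | h1 <;> rcases hd' i.succ with h2 | h2 <;>
      rw [h1, h2] <;> norm_num
  linarith
end
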